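/- Let (p_n)_{n ≥ 0} be any sequence of polynomials over a commutative ring R and (z_i)_{i ≥ 0} elements of R. Define t_0(0;−Z) = 1 and, for n ≥ 1, t_n(0;−Z) = −Σ_{i=0}^{n−1} C(n,i) · p_{n−i}(−z_i) · t_i(0;−Z). Then for every n ≥ 1, t_n(0;−Z) = Σ_{ρ} (−1)^{|ρ|} · ∏_{i=1}^{k} p_{b_i}(−z_{s_{i−1}}), where the sum runs over all ordered partitions ρ = (B_1,…,B_k) of {1,…,n} (ordered lists of pairwise disjoint nonempty subsets whose union is {1,…,n}), |ρ| = k, b_i = |B_i|, s_0 = 0 and s_i = b_1 + ⋯ + b_i. (Theorem 4.5.) -/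

import Mathlib

/-!
Encode an ordered partition of a finite set `α` into `k` blocks as a surjection `c : α → Fin k`.
Splitting off the last block `A = c⁻¹(k - 1)` is a bijection onto pairs of a nonempty `A ⊆ α`
and a surjection `Aᶜ → Fin (k - 1)`; the earlier blocks keep their sizes and partial sums, and the
last block contributes the factor `-p_{|A|}(-z_{|Aᶜ|})`, since `s_{k-1} = |Aᶜ|`. Summing over
`k` and over the `C(n, i)` choices of `A` with `|Aᶜ| = i`, the partition sum of an `n`-element
set satisfies the recursion defining `t_n(0; -Z)`, and induction on `n` over all finite types
concludes.
-/

open Finset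

variable {R : Type*} [CommRing R]

/-- The constant terms `t_n(0; -Z)` of the Gončarov polynomials, defined by
`t_0(0; -Z) = 1` and `t_n(0; -Z) = -∑_{i=0}^{n-1} C(n,i) p_{n-i}(-z_i) t_i(0; -Z)`. -/
noncomputable def tcoef (p : ℕ → Polynomial R) (z : ℕ → R) (n : ℕ) : R :=
  if n = 0 then 1
  else -∑ i ∈ (Finset.range n).attach,
    (n.choose i.1 : R) * (p (n - i.1)).eval (-(z i.1)) * tcoef p z i.1
termination_by n
decreasing_by exact Finset.mem_range.mp i.2

theorem sum_powerset_nonempty_apply_card {M β : Type*} [AddCommMonoid M] (s : Finset β)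
    (f : ℕ → ℕ → M) :
    ∑ A ∈ s.powerset with A.Nonempty, f #A (#s - #A)
      = ∑ i ∈ range #s, (#s).choose i • f (#s - i) i := by
  set n := #s
  let g : ℕ → M := fun m => if 0 < m then f m (n - m) else 0
  calc ∑ A ∈ s.powerset with A.Nonempty, f #A (n - #A)
      = ∑ A ∈ s.powerset, g #A := by
        rw [sum_filter]
        exact sum_congr rfl fun A _ => by simp only [g, card_pos]
    _ = ∑ i ∈ range (n + 1), n.choose (n - i) • g (n - i) := by
        rw [sum_powerset_apply_card, ← sum_range_reflect, Nat.add_sub_cancel]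
    _ = ∑ i ∈ range n, n.choose i • f (n - i) i := by
        rw [sum_range_succ, Nat.sub_self]
        simp only [g, lt_irrefl, if_false, smul_zero, add_zero]
        refine sum_congr rfl fun i hi => ?_
        have hi : i < n := mem_range.mp hi
        rw [Nat.choose_symm hi.le, if_pos (by omega), Nat.sub_sub_self hi.le]

section Blocks

variable {α : Type*} [Fintype α] {k : ℕ}

def block (c : α → Fin k) (i : Fin k) : Finset α := {m | c m = i}

theorem sum_card_block_lt (c : α → Fin k) (i : Fin k) :
    ∑ j ∈ {j | j < i}, #(block c j) = #{m | c m < i} := by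
  simp only [block, sum_card_fiberwise_eq_card_filter, mem_filter, mem_univ, true_and]

variable [DecidableEq α]

def extendByLast (A : Finset α) (c : ↥(Aᶜ) → Fin k) (m : α) : Fin (k + 1) :=
  if h : m ∈ A then Fin.last k else (c ⟨m, mem_compl.mpr h⟩).castSucc

def restrictOfBlockLast (A : Finset α) (c : α → Fin (k + 1)) (hc : block c (Fin.last k) = A)
    (x : ↥(Aᶜ)) : Fin k :=
  (c x).castPred fun h => mem_compl.mp x.2 (hc ▸ by simpa [block] using h)

section ExtendByLast

variable {A : Finset α} (c : ↥(Aᶜ) → Fin k)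

theorem extendByLast_eq_last_iff (m : α) : extendByLast A c m = Fin.last k ↔ m ∈ A := by
  by_cases h : m ∈ A <;> simp [extendByLast, h, Fin.castSucc_ne_last]

theorem block_extendByLast_last : block (extendByLast A c) (Fin.last k) = A := by
  ext m
  simp [block, extendByLast_eq_last_iff]

theorem card_filter_extendByLast (P : Fin (k + 1) → Prop) [DecidablePred P]
    (hP : ¬ P (Fin.last k)) :
    #{m | P (extendByLast A c m)} = #{x | P (c x).castSucc} := by
  rw [← card_map (Function.Embedding.subtype (· ∈ Aᶜ))]
  congr 1
  ext m
  simp only [mem_filter, mem_univ, true_and, mem_map, Function.Embedding.coe_subtype]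
  by_cases h : m ∈ A <;> simp [extendByLast, h, hP]

theorem extendByLast_injective :
    Function.Injective (extendByLast (k := k) (A := A)) := by
  intro c₁ c₂ h
  funext x
  have := congrFun h x
  simpa [extendByLast, mem_compl.mp x.2] using this

theorem surjective_extendByLast_iff (hA : A.Nonempty) :
    Function.Surjective (extendByLast A c) ↔ Function.Surjective c := by
  constructor
  · intro h j
    obtain ⟨m, hm⟩ := h j.castSucc
    have hmA : m ∉ A := fun hmA =>
      Fin.castSucc_ne_last j (hm.symm.trans ((extendByLast_eq_last_iff c m).mpr hmA))
    refine ⟨⟨m, mem_compl.mpr hmA⟩, Fin.castSucc_injective _ ?_⟩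
    simpa [extendByLast, hmA] using hm
  · intro h j
    induction j using Fin.lastCases with
    | last =>
      obtain ⟨m, hm⟩ := hA
      exact ⟨m, (extendByLast_eq_last_iff c m).mpr hm⟩
    | cast j =>
      obtain ⟨x, rfl⟩ := h j
      exact ⟨x, by simp [extendByLast, mem_compl.mp x.2]⟩

theorem extendByLast_restrictOfBlockLast (c : α → Fin (k + 1))
    (hc : block c (Fin.last k) = A) : extendByLast A (restrictOfBlockLast A c hc) = c := by
  funext m
  have hm : c m = Fin.last k ↔ m ∈ A := by simp [← hc, block]
  by_cases h : m ∈ A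
  · simp [extendByLast, h, hm.mpr h]
  · simp [extendByLast, restrictOfBlockLast, h]

end ExtendByLast

end Blocks

section PartitionSums

variable (p : ℕ → Polynomial R) (z : ℕ → R)

noncomputable def partitionWeight {α : Type*} [Fintype α] {k : ℕ} (c : α → Fin k) : R :=
  (-1) ^ k * ∏ i, (p #(block c i)).eval (-(z (∑ j ∈ {j | j < i}, #(block c j))))

noncomputable def partitionSum (α : Type*) [Fintype α] [DecidableEq α] (k : ℕ) : R :=
  ∑ c ∈ (univ : Finset (α → Fin k)).filter Function.Surjective, partitionWeight p z c

noncomputable def orderedPartitionSum (α : Type*) [Fintype α] [DecidableEq α] : R :=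
  ∑ k ∈ range (Fintype.card α + 1), partitionSum p z α k

variable {α : Type*} [Fintype α] [DecidableEq α]

theorem partitionWeight_extendByLast {A : Finset α} {k : ℕ} (c : ↥(Aᶜ) → Fin k) :
    partitionWeight p z (extendByLast A c)
      = -(p #A).eval (-(z #Aᶜ)) * partitionWeight p z c := by
  have hcard (j : Fin k) : #(block (extendByLast A c) j.castSucc) = #(block c j) := by
    simp only [block]
    rw [card_filter_extendByLast c (· = j.castSucc) (Fin.castSucc_ne_last j).symm]
    simp only [Fin.castSucc_inj]
  have hstart (j : Fin k) : #{m | extendByLast A c m < j.castSucc} = #{x | c x < j} := by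
    rw [card_filter_extendByLast c (· < j.castSucc) (lt_asymm (Fin.castSucc_lt_last j))]
    simp only [Fin.castSucc_lt_castSucc_iff]
  have hlast : #{m | extendByLast A c m < Fin.last k} = #Aᶜ := by
    rw [card_filter_extendByLast c (· < Fin.last k) (lt_irrefl _)]
    simp only [Fin.castSucc_lt_last, filter_true, card_univ, Fintype.card_coe]
  simp only [partitionWeight, sum_card_block_lt, Fin.prod_univ_castSucc, hcard, hstart, hlast,
    block_extendByLast_last, pow_succ]
  ring

theorem partitionSum_eq_zero_of_card_lt {k : ℕ} (h : Fintype.card α < k) :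
    partitionSum p z α k = 0 := by
  refine sum_eq_zero fun c hc => absurd h (not_lt.mpr ?_)
  simpa using Fintype.card_le_of_surjective c (mem_filter.mp hc).2

theorem partitionSum_zero [Nonempty α] : partitionSum p z α 0 = 0 := by
  rw [partitionSum, univ_eq_empty, filter_empty, sum_empty]

theorem sum_range_partitionSum_of_card_lt {N : ℕ} (h : Fintype.card α < N) :
    ∑ k ∈ range N, partitionSum p z α k = orderedPartitionSum p z α :=
  (sum_subset (range_subset_range.mpr h) fun k _ hk =>
    partitionSum_eq_zero_of_card_lt p z (by simpa using hk)).symm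

theorem sum_filter_block_last_eq {A : Finset α} (hA : A.Nonempty) (k : ℕ) :
    ∑ c ∈ (univ : Finset (α → Fin (k + 1))).filter Function.Surjective
        with block c (Fin.last k) = A, partitionWeight p z c
      = -(p #A).eval (-(z #Aᶜ)) * partitionSum p z (↥(Aᶜ)) k := by
  rw [partitionSum, mul_sum]
  symm
  refine sum_bij (fun c _ => extendByLast A c) (fun c hc => ?_)
    (fun c₁ _ c₂ _ h => extendByLast_injective h) (fun c hc => ?_)
    (fun c _ => (partitionWeight_extendByLast p z c).symm)
  · simp only [mem_filter, mem_univ, true_and] at hc ⊢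
    exact ⟨(surjective_extendByLast_iff c hA).mpr hc, block_extendByLast_last c⟩
  · simp only [mem_filter, mem_univ, true_and] at hc
    obtain ⟨hsurj, hblock⟩ := hc
    have hext := extendByLast_restrictOfBlockLast c hblock
    refine ⟨restrictOfBlockLast A c hblock, ?_, hext⟩
    simpa only [mem_filter, mem_univ, true_and, ← surjective_extendByLast_iff _ hA, hext]

theorem partitionSum_succ (k : ℕ) :
    partitionSum p z α (k + 1)
      = ∑ A ∈ (univ : Finset α).powerset with A.Nonempty,
          -(p #A).eval (-(z #Aᶜ)) * partitionSum p z (↥(Aᶜ)) k := by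
  have hmaps : ∀ c ∈ (univ : Finset (α → Fin (k + 1))).filter Function.Surjective,
      block c (Fin.last k) ∈ (univ : Finset α).powerset.filter Finset.Nonempty := fun c hc => by
    obtain ⟨m, hm⟩ := (mem_filter.mp hc).2 (Fin.last k)
    exact mem_filter.mpr ⟨mem_powerset.mpr (subset_univ _), m, by simpa [block] using hm⟩
  rw [partitionSum, ← sum_fiberwise_of_maps_to hmaps]
  exact sum_congr rfl fun A hA => sum_filter_block_last_eq p z (mem_filter.mp hA).2 k

theorem orderedPartitionSum_of_isEmpty [IsEmpty α] : orderedPartitionSum p z α = 1 := by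
  have hsurj : ∀ c : α → Fin 0, Function.Surjective c := fun _ j => j.elim0
  simp [orderedPartitionSum, partitionSum, filter_true_of_mem fun c _ => hsurj c,
    partitionWeight]

theorem orderedPartitionSum_of_nonempty [Nonempty α] :
    orderedPartitionSum p z α
      = ∑ A ∈ (univ : Finset α).powerset with A.Nonempty,
          -(p #A).eval (-(z #Aᶜ)) * orderedPartitionSum p z (↥(Aᶜ)) := by
  rw [orderedPartitionSum, sum_range_succ', partitionSum_zero, add_zero]
  simp_rw [partitionSum_succ]
  rw [sum_comm]
  refine sum_congr rfl fun A hA => ?_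
  have hlt : Fintype.card ↥(Aᶜ) < Fintype.card α := by
    rw [Fintype.card_coe, card_compl_lt_iff_nonempty]
    exact (mem_filter.mp hA).2
  rw [← mul_sum, sum_range_partitionSum_of_card_lt p z hlt]

theorem orderedPartitionSum_eq_tcoef (α : Type*) [Fintype α] [DecidableEq α] :
    orderedPartitionSum p z α = tcoef p z (Fintype.card α) := by
  induction hn : Fintype.card α using Nat.strong_induction_on generalizing α with
  | _ n ih =>
  rcases isEmpty_or_nonempty α with hα | hα
  · rw [orderedPartitionSum_of_isEmpty, tcoef, if_pos (hn ▸ Fintype.card_eq_zero)]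
  have hcompl (A : Finset α) (hA : A.Nonempty) :
      orderedPartitionSum p z (↥(Aᶜ)) = tcoef p z (n - #A) := by
    have hlt : Fintype.card ↥(Aᶜ) < n := by
      rw [Fintype.card_coe, ← hn]
      exact (card_compl_lt_iff_nonempty A).mpr hA
    rw [ih _ hlt _ rfl, Fintype.card_coe, card_compl, hn]
  have key := sum_powerset_nonempty_apply_card (univ : Finset α)
    fun a b => -(p a).eval (-(z b)) * tcoef p z b
  simp only [card_univ, hn] at key
  rw [orderedPartitionSum_of_nonempty, tcoef, if_neg (hn ▸ Fintype.card_ne_zero),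
    sum_attach (range n) fun i => (n.choose i : R) * (p (n - i)).eval (-(z i)) * tcoef p z i]
  calc _ = ∑ A ∈ (univ : Finset α).powerset with A.Nonempty,
        -(p #A).eval (-(z (n - #A))) * tcoef p z (n - #A) :=
      sum_congr rfl fun A hA => by rw [hcompl A (mem_filter.mp hA).2, card_compl, hn]
    _ = _ := by
      rw [key, ← sum_neg_distrib]
      refine sum_congr rfl fun i _ => ?_
      rw [nsmul_eq_mul]
      ring

end PartitionSums

theorem tcoef_ordered_partitions (p : ℕ → Polynomial R) (z : ℕ → R) (n : ℕ) :
    tcoef p z n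
      = ∑ k ∈ Finset.range (n + 1),
          ∑ c ∈ (Finset.univ : Finset (Fin n → Fin k)).filter Function.Surjective,
            (-1 : R) ^ k *
              ∏ i : Fin k,
                (p ((Finset.univ.filter fun m => c m = i).card)).eval
                  (-(z (∑ j ∈ Finset.univ.filter fun j : Fin k => j < i,
                      (Finset.univ.filter fun m => c m = j).card))) := by
  have h := orderedPartitionSum_eq_tcoef p z (Fin n)
  rw [orderedPartitionSum, Fintype.card_fin] at h
  exact h.symm
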